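/- arXiv:2005.08545 — 3 statements merged into one kernel-verified Lean document; each statement's English description precedes it below -/
import Mathlib

section
/- Consider a finite collection 𝒞* of pairwise vertex-disjoint cycles in a directed graph with vertex set of size n, with nonnegative cycle weights γ(C). Suppose a greedy procedure selects cycles C_1, C_2, …, C_K iteratively (removing each selected cycle's vertices), such that at every iteration k, every cycle C ∈ 𝒞* that is still fully present in the remaining graph and intersects C_k satisfies γ(C) ≤ γ(C_k), and every cycle of 𝒞* intersects some selected C_k at the iteration in which its vertices are first removed. Then Σ_{C∈𝒞*} γ(C) ≤ (max_k |C_k|) · Σ_k γ(C_k). -/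
/-!
Charge every optimal cycle `D` to the greedy cycle `C (φ D)` it meets. The cycles charged to
`C k` are pairwise disjoint and each contains a vertex of `C k`, so there are at most `|C k|`
of them, and each weighs at most `γ (C k)`. Summing over `k` gives the bound.
-/

open Finset

namespace Finset

variable {α : Type*}

theorem card_le_card_of_pairwiseDisjoint_of_inter_nonempty [DecidableEq α]
    {F : Finset (Finset α)} {s : Finset α} (hdisj : (F : Set (Finset α)).Pairwise Disjoint)
    (hmeet : ∀ D ∈ F, (D ∩ s).Nonempty) : #F ≤ #s := by
  refine card_le_card_of_forall_subsingleton (fun D x => x ∈ D) (fun D hD => ?_) ?_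
  · obtain ⟨x, hx⟩ := hmeet D hD
    exact ⟨x, (mem_inter.mp hx).2, (mem_inter.mp hx).1⟩
  · rintro x - D ⟨hD, hxD⟩ D' ⟨hD', hxD'⟩
    by_contra hne
    exact disjoint_left.mp (hdisj hD hD' hne) hxD hxD'

theorem sum_le_card_mul_of_pairwiseDisjoint_of_inter_nonempty [DecidableEq α]
    {F : Finset (Finset α)} {s : Finset α} (hdisj : (F : Set (Finset α)).Pairwise Disjoint)
    (hmeet : ∀ D ∈ F, (D ∩ s).Nonempty) (γ : Finset α → ℝ) {w : ℝ} (hw : 0 ≤ w)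
    (hle : ∀ D ∈ F, γ D ≤ w) : ∑ D ∈ F, γ D ≤ #s * w :=
  calc ∑ D ∈ F, γ D ≤ #F • w := sum_le_card_nsmul F γ w hle
    _ = #F * w := nsmul_eq_mul _ _
    _ ≤ #s * w := by
      gcongr
      exact card_le_card_of_pairwiseDisjoint_of_inter_nonempty hdisj hmeet

end Finset

theorem stmt2_general {V : Type*} [DecidableEq V] {K : ℕ}
    (𝒞s : Finset (Finset V)) (γ : Finset V → ℝ) (C : Fin K → Finset V)
    (hdisj : (𝒞s : Set (Finset V)).Pairwise Disjoint)
    (hγC : ∀ k, 0 ≤ γ (C k))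
    (φ : Finset V → Fin K)
    (hint : ∀ D ∈ 𝒞s, (D ∩ C (φ D)).Nonempty)
    (hle : ∀ D ∈ 𝒞s, γ D ≤ γ (C (φ D))) :
    ∑ D ∈ 𝒞s, γ D ≤ ((Finset.univ.sup fun k => (C k).card : ℕ) : ℝ) * ∑ k, γ (C k) := by
  rw [← sum_fiberwise 𝒞s φ γ, mul_sum]
  refine sum_le_sum fun k _ => ?_
  calc ∑ D ∈ 𝒞s with φ D = k, γ D ≤ #(C k) * γ (C k) := by
        refine sum_le_card_mul_of_pairwiseDisjoint_of_inter_nonempty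
          (hdisj.mono (coe_subset.mpr (filter_subset _ _))) (fun D hD => ?_) γ (hγC k)
          (fun D hD => ?_)
        · obtain ⟨hD𝒞, rfl⟩ := mem_filter.mp hD
          exact hint D hD𝒞
        · obtain ⟨hD𝒞, rfl⟩ := mem_filter.mp hD
          exact hle D hD𝒞
    _ ≤ _ := by
      gcongr
      · exact hγC k
      · exact le_sup (f := fun k => #(C k)) (mem_univ k)

/-- Greedy counting lemma behind the `max |C|`-approximation: if every optimal cycle `D`
is charged (via `φ`) to a greedy cycle that it intersects and that has at least its weight,
then the optimal total weight is at most `(max_k |C_k|)` times the greedy total weight. -/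
theorem stmt2 {V : Type*} [DecidableEq V] {K : ℕ}
    (𝒞s : Finset (Finset V)) (γ : Finset V → ℝ) (C : Fin K → Finset V)
    (hdisj : (𝒞s : Set (Finset V)).Pairwise Disjoint)
    (hγ : ∀ D ∈ 𝒞s, 0 ≤ γ D)
    (hγC : ∀ k, 0 ≤ γ (C k))
    (φ : Finset V → Fin K)
    (hint : ∀ D ∈ 𝒞s, (D ∩ C (φ D)).Nonempty)
    (hle : ∀ D ∈ 𝒞s, γ D ≤ γ (C (φ D))) :
    ∑ D ∈ 𝒞s, γ D ≤ ((Finset.univ.sup fun k => (C k).card : ℕ) : ℝ) * ∑ k, γ (C k) :=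
  stmt2_general 𝒞s γ C hdisj hγC φ hint hle
end

section
/- (Upper bound: η* ≤ |E| + OPT_vc) Let G = (Λ, E) be a finite simple undirected graph, and construct the index coding instance with data chunks d_λ (λ ∈ Λ) and d_e (e ∈ E), and for each edge e = (x,y) three clients: c_{e,1} wanting d_e with side information {d_x, d_y}, c_{e,2} wanting d_x with side information {d_e}, and c_{e,3} wanting d_y with side information {d_e}. If Λ* ⊆ Λ is a vertex cover of G of size OPT_vc, then the coding scheme that transmits d_λ for each λ ∈ Λ*, transmits d_e for each edge with both endpoints in Λ*, and transmits d_x + d_e (respectively d_y + d_e) for each edge e = (x,y) with x ∉ Λ* (respectively y ∉ Λ*), satisfies every client using exactly |E| + |Λ*| transmissions. Hence the minimum number of transmissions satisfying all clients is at most |E| + OPT_vc. -/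
open Finset

/-! Every edge `e` is sent as one transmission: `d_e` alone, or `d_x + d_e` when `e` has an
endpoint `x` outside the cover; since the cover meets `e`, there is at most one such `x`.
Each cover vertex `v` is sent as `d_v`. A client wanting `d_e` strips off the endpoint chunk it
knows, and a client wanting `d_x` either receives it directly (`x` in the cover) or strips
`d_e` off `d_x + d_e`. -/

theorem Sym2.eq_of_mem_of_mem_of_ne {V : Type*} {e : Sym2 V} {x y z : V}
    (hx : x ∈ e) (hy : y ∈ e) (hz : z ∈ e) (hzx : z ≠ x) (hzy : z ≠ y) : x = y := by
  rw [(Sym2.mem_and_mem_iff hzx.symm).1 ⟨hx, hz⟩, Sym2.mem_iff] at hy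
  exact (hy.resolve_right hzy.symm).symm

namespace VertexCoverScheme

variable {V : Type*} [DecidableEq V]

def uncovered (VC : Finset V) (e : Sym2 V) : Finset V :=
  {x ∈ e.toFinset | x ∉ VC}

@[simp]
theorem mem_uncovered {VC : Finset V} {e : Sym2 V} {x : V} :
    x ∈ uncovered VC e ↔ x ∈ e ∧ x ∉ VC := by
  simp [uncovered, Sym2.mem_toFinset]

theorem card_uncovered_le_one {VC : Finset V} {e : Sym2 V} (hcov : ∃ z ∈ e, z ∈ VC) :
    #(uncovered VC e) ≤ 1 := by
  obtain ⟨z, hze, hzVC⟩ := hcov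
  refine card_le_one.2 fun x hx y hy => ?_
  rw [mem_uncovered] at hx hy
  exact Sym2.eq_of_mem_of_mem_of_ne hx.1 hy.1 hze (ne_of_mem_of_not_mem hzVC hx.2)
    (ne_of_mem_of_not_mem hzVC hy.2)

/-- A transmission is encoded as the set of chunks it sums over GF(2). -/
def edgeTransmission (VC : Finset V) (e : Sym2 V) : Finset (V ⊕ Sym2 V) :=
  insert (Sum.inr e) ((uncovered VC e).image Sum.inl)

def scheme (E : Finset (Sym2 V)) (VC : Finset V) : Finset (Finset (V ⊕ Sym2 V)) :=
  E.image (edgeTransmission VC) ∪ VC.image fun v => {Sum.inl v}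

theorem card_scheme_le (E : Finset (Sym2 V)) (VC : Finset V) :
    #(scheme E VC) ≤ #E + #VC :=
  (card_union_le _ _).trans (add_le_add card_image_le card_image_le)

theorem card_edgeTransmission_le_two {VC : Finset V} {e : Sym2 V} (hcov : ∃ z ∈ e, z ∈ VC) :
    #(edgeTransmission VC e) ≤ 2 :=
  calc #(edgeTransmission VC e) ≤ #((uncovered VC e).image Sum.inl) + 1 := card_insert_le _ _
    _ ≤ #(uncovered VC e) + 1 := by grw [card_image_le]
    _ ≤ 2 := Nat.add_le_add_right (card_uncovered_le_one hcov) 1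

theorem card_le_two_of_mem_scheme {E : Finset (Sym2 V)} {VC : Finset V}
    (hVC : ∀ e ∈ E, ∃ x ∈ e, x ∈ VC) {t : Finset (V ⊕ Sym2 V)} (ht : t ∈ scheme E VC) :
    #t ≤ 2 := by
  rcases mem_union.1 ht with ht | ht
  · obtain ⟨e, he, rfl⟩ := mem_image.1 ht
    exact card_edgeTransmission_le_two (hVC e he)
  · obtain ⟨v, -, rfl⟩ := mem_image.1 ht
    simp

theorem edgeTransmission_decodes_edge (VC : Finset V) (e : Sym2 V) :
    Sum.inr e ∈ edgeTransmission VC e ∧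
      ∀ c ∈ (edgeTransmission VC e).erase (Sum.inr e), ∃ x ∈ e, c = Sum.inl x := by
  refine ⟨mem_insert_self _ _, fun c hc => ?_⟩
  obtain ⟨hne, hc⟩ := mem_erase.1 hc
  obtain ⟨x, hx, rfl⟩ := mem_image.1 ((mem_insert.1 hc).resolve_left hne)
  exact ⟨x, (mem_uncovered.1 hx).1, rfl⟩

theorem edgeTransmission_decodes_uncovered {VC : Finset V} {e : Sym2 V}
    (hcov : ∃ z ∈ e, z ∈ VC) {x : V} (hx : x ∈ e) (hxVC : x ∉ VC) :
    Sum.inl x ∈ edgeTransmission VC e ∧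
      ∀ c ∈ (edgeTransmission VC e).erase (Sum.inl x), c = Sum.inr e := by
  have hxu : x ∈ uncovered VC e := mem_uncovered.2 ⟨hx, hxVC⟩
  refine ⟨mem_insert_of_mem (mem_image_of_mem _ hxu), fun c hc => ?_⟩
  obtain ⟨hne, hc⟩ := mem_erase.1 hc
  refine (mem_insert.1 hc).resolve_right fun hc => hne ?_
  obtain ⟨y, hy, rfl⟩ := mem_image.1 hc
  exact congrArg Sum.inl (card_le_one.1 (card_uncovered_le_one hcov) y hy x hxu)

theorem exists_mem_scheme_decodes_edge {E : Finset (Sym2 V)} {VC : Finset V}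
    {e : Sym2 V} (he : e ∈ E) :
    ∃ t ∈ scheme E VC, Sum.inr e ∈ t ∧ ∀ c ∈ t.erase (Sum.inr e), ∃ x ∈ e, c = Sum.inl x :=
  ⟨_, mem_union_left _ (mem_image_of_mem _ he), edgeTransmission_decodes_edge VC e⟩

theorem exists_mem_scheme_decodes_vertex {E : Finset (Sym2 V)} {VC : Finset V}
    (hVC : ∀ e ∈ E, ∃ x ∈ e, x ∈ VC) {e : Sym2 V} (he : e ∈ E) {x : V} (hx : x ∈ e) :
    ∃ t ∈ scheme E VC, Sum.inl x ∈ t ∧ ∀ c ∈ t.erase (Sum.inl x), c = Sum.inr e := by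
  by_cases hxVC : x ∈ VC
  · refine ⟨{Sum.inl x}, mem_union_right _ (mem_image_of_mem _ hxVC), mem_singleton_self _,
      fun c hc => ?_⟩
    simp at hc
  · exact ⟨_, mem_union_left _ (mem_image_of_mem _ he),
      edgeTransmission_decodes_uncovered (hVC e he) hx hxVC⟩

end VertexCoverScheme

open VertexCoverScheme in
theorem stmt13_general {V : Type*} [DecidableEq V] (E : Finset (Sym2 V))
    (VC : Finset V) (hVC : ∀ e ∈ E, ∃ x ∈ e, x ∈ VC) :
    ∃ T : Finset (Finset (V ⊕ Sym2 V)),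
      T.card ≤ E.card + VC.card ∧
      (∀ t ∈ T, t.card ≤ 2) ∧
      (∀ e ∈ E, ∃ t ∈ T, Sum.inr e ∈ t ∧
        ∀ c ∈ t.erase (Sum.inr e), ∃ x ∈ e, c = Sum.inl x) ∧
      (∀ e ∈ E, ∀ x ∈ e, ∃ t ∈ T, Sum.inl x ∈ t ∧
        ∀ c ∈ t.erase (Sum.inl x), c = Sum.inr e) :=
  ⟨scheme E VC, card_scheme_le E VC, fun _ => card_le_two_of_mem_scheme hVC,
    fun _ => exists_mem_scheme_decodes_edge, fun _ he _ => exists_mem_scheme_decodes_vertex hVC he⟩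

/-- Upper bound `η* ≤ |E| + OPT_vc`: from any vertex cover `VC` of the graph `(V, E)`
one obtains a set `T` of at most `|E| + |VC|` (sparse, instantly decodable)
transmissions satisfying every client of the constructed index coding instance:
client `c_{e,1}` (wanting `d_e` with side information the endpoint chunks) and, for
each endpoint `x` of `e`, the client wanting `d_x` with side information `{d_e}`. -/
theorem stmt13 {V : Type*} [DecidableEq V] (E : Finset (Sym2 V))
    (hE : ∀ e ∈ E, ¬ e.IsDiag)
    (VC : Finset V) (hVC : ∀ e ∈ E, ∃ x ∈ e, x ∈ VC) :
    ∃ T : Finset (Finset (V ⊕ Sym2 V)),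
      T.card ≤ E.card + VC.card ∧
      (∀ t ∈ T, t.card ≤ 2) ∧
      (∀ e ∈ E, ∃ t ∈ T, Sum.inr e ∈ t ∧
        ∀ c ∈ t.erase (Sum.inr e), ∃ x ∈ e, c = Sum.inl x) ∧
      (∀ e ∈ E, ∀ x ∈ e, ∃ t ∈ T, Sum.inl x ∈ t ∧
        ∀ c ∈ t.erase (Sum.inl x), c = Sum.inr e) :=
  stmt13_general E VC hVC
end

section
/- (Lower bound: η* ≥ |E| + OPT_vc, instant decoding) In the index coding instance constructed from a graph G = (Λ, E) as above, suppose a set of instantly decodable sparse transmissions (each transmission is d or d + d' for chunks d, d') satisfies all clients. For each edge e, at least one transmission t_e ∈ {d_e, d_e + d_x, d_e + d_y} is needed to satisfy c_{e,1}. Let Λ̃ be the set of vertices x having an incident edge e such that the client wanting d_x cannot decode from t_e; then Λ̃ is a vertex cover of G, and the total number of transmissions is at least |E| + |Λ̃| ≥ |E| + OPT_vc. -/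
/-!
For each edge `e` fix a transmission `t_e` from which `c_{e,1}` decodes. These are pairwise
distinct, since `d_e` is the only edge chunk in `t_e`. A transmission from which `c_{e,x}`
decodes holds `d_x` and no edge chunk but `d_e`, so if it is some `t_{e'}` then it is `t_e`;
and `t_e` cannot serve both endpoints of `e`. Hence every edge has an endpoint served by a
transmission outside `{t_e}`. Such transmissions are distinct for distinct vertices, so the
vertex cover `Λ̃` of these endpoints satisfies `|T| ≥ |E| + |Λ̃|`.
-/

open Finset

namespace IndexCoding

variable {V : Type*} [DecidableEq V]

/-- `c_{e,1}`, knowing the chunks of both endpoints of `e`, decodes `d_e` from `t`. -/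
def DecodesEdge (e : Sym2 V) (t : Finset (V ⊕ Sym2 V)) : Prop :=
  Sum.inr e ∈ t ∧ ∀ c ∈ t.erase (Sum.inr e), ∃ x ∈ e, c = Sum.inl x

/-- The client of the edge `e` that knows `d_e` and wants `d_x` decodes it from `t`. -/
def DecodesVertex (e : Sym2 V) (x : V) (t : Finset (V ⊕ Sym2 V)) : Prop :=
  Sum.inl x ∈ t ∧ ∀ c ∈ t.erase (Sum.inl x), c = Sum.inr e

theorem DecodesEdge.eq_of_inr_mem {e e' : Sym2 V} {t : Finset (V ⊕ Sym2 V)}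
    (h : DecodesEdge e t) (he' : Sum.inr e' ∈ t) : e' = e := by
  by_contra hne
  obtain ⟨x, -, hx⟩ := h.2 _ (mem_erase.2 ⟨by simpa using hne, he'⟩)
  exact Sum.inr_ne_inl hx

theorem DecodesVertex.eq_of_inl_mem {e : Sym2 V} {x y : V} {t : Finset (V ⊕ Sym2 V)}
    (h : DecodesVertex e x t) (hy : Sum.inl y ∈ t) : y = x := by
  by_contra hne
  exact Sum.inl_ne_inr (h.2 _ (mem_erase.2 ⟨by simpa using hne, hy⟩))

theorem DecodesVertex.eq_of_inr_mem {e e' : Sym2 V} {x : V} {t : Finset (V ⊕ Sym2 V)}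
    (h : DecodesVertex e x t) (he' : Sum.inr e' ∈ t) : e' = e :=
  Sum.inr_injective (h.2 _ (mem_erase.2 ⟨Sum.inr_ne_inl, he'⟩))

section Transmissions

variable {E : Finset (Sym2 V)} {g : Sym2 V → Finset (V ⊕ Sym2 V)}

theorem card_image_of_decodesEdge (hg : ∀ e ∈ E, DecodesEdge e (g e)) :
    #(E.image g) = #E :=
  card_image_of_injOn fun e he e' he' heq =>
    ((hg e he).eq_of_inr_mem (heq ▸ (hg e' he').1)).symm

theorem DecodesVertex.eq_of_mem_image (hg : ∀ e ∈ E, DecodesEdge e (g e)) {e : Sym2 V} {x : V}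
    {t : Finset (V ⊕ Sym2 V)} (h : DecodesVertex e x t) (ht : t ∈ E.image g) : t = g e := by
  obtain ⟨e', he', rfl⟩ := mem_image.1 ht
  rw [h.eq_of_inr_mem (hg e' he').1]

theorem exists_decodesVertex_mem_sdiff_image {T : Finset (Finset (V ⊕ Sym2 V))}
    (hg : ∀ e ∈ E, DecodesEdge e (g e)) {e : Sym2 V} (he : ¬ e.IsDiag)
    (hc : ∀ x ∈ e, ∃ t ∈ T, DecodesVertex e x t) :
    ∃ x ∈ e, ∃ t ∈ T \ E.image g, DecodesVertex e x t := by
  obtain ⟨x, hx⟩ : ∃ x, x ∈ e := ⟨_, Sym2.out_fst_mem e⟩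
  have hy := Sym2.other_mem hx
  obtain ⟨tx, htxT, htx⟩ := hc x hx
  obtain ⟨ty, htyT, hty⟩ := hc _ hy
  have hnot_both : tx ∉ E.image g ∨ ty ∉ E.image g := by
    by_contra! h
    have hsame : tx = ty :=
      (htx.eq_of_mem_image hg h.1).trans (hty.eq_of_mem_image hg h.2).symm
    exact Sym2.other_ne he hx (htx.eq_of_inl_mem (hsame ▸ hty.1))
  rcases hnot_both with hxU | hyU
  · exact ⟨x, hx, tx, mem_sdiff.2 ⟨htxT, hxU⟩, htx⟩
  · exact ⟨_, hy, ty, mem_sdiff.2 ⟨htyT, hyU⟩, hty⟩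

end Transmissions

theorem card_le_of_forall_decodesVertex {Λ : Finset V} {S : Finset (Finset (V ⊕ Sym2 V))}
    (hΛ : ∀ x ∈ Λ, ∃ t ∈ S, ∃ e, DecodesVertex e x t) : #Λ ≤ #S :=
  card_le_card_of_forall_subsingleton (fun x t => ∃ e, DecodesVertex e x t) hΛ
    fun _ _ _ ⟨_, _, hx⟩ _ ⟨_, _, hy⟩ => hy.eq_of_inl_mem hx.1

end IndexCoding

open IndexCoding in
theorem stmt14_general {V : Type*} [DecidableEq V] (E : Finset (Sym2 V))
    (hE : ∀ e ∈ E, ¬ e.IsDiag)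
    (T : Finset (Finset (V ⊕ Sym2 V)))
    (hc1 : ∀ e ∈ E, ∃ t ∈ T, Sum.inr e ∈ t ∧
      ∀ c ∈ t.erase (Sum.inr e), ∃ x ∈ e, c = Sum.inl x)
    (hc23 : ∀ e ∈ E, ∀ x ∈ e, ∃ t ∈ T, Sum.inl x ∈ t ∧
      ∀ c ∈ t.erase (Sum.inl x), c = Sum.inr e) :
    ∃ Λt : Finset V, (∀ e ∈ E, ∃ x ∈ e, x ∈ Λt) ∧ E.card + Λt.card ≤ T.card := by
  classical
  choose! g hgT hg using hc1
  let U := E.image g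
  let Λt := (E.biUnion Sym2.toFinset).filter fun x => ∃ t ∈ T \ U, ∃ e, DecodesVertex e x t
  refine ⟨Λt, fun e he => ?_, ?_⟩
  · obtain ⟨x, hx, t, ht, hdec⟩ := exists_decodesVertex_mem_sdiff_image hg (hE e he) (hc23 e he)
    exact ⟨x, hx, mem_filter.2 ⟨mem_biUnion.2 ⟨e, he, Sym2.mem_toFinset.2 hx⟩, t, ht, e, hdec⟩⟩
  · calc #E + #Λt ≤ #U + #(T \ U) :=
          add_le_add (card_image_of_decodesEdge hg).ge
            (card_le_of_forall_decodesVertex fun _ hx => (mem_filter.1 hx).2)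
      _ = #T := by rw [add_comm, card_sdiff_add_card_eq_card (image_subset_iff.2 hgT)]

/-- Lower bound `η* ≥ |E| + OPT_vc` for instant decoding: any set `T` of sparse
(instantly decodable) transmissions satisfying every client of the constructed
instance admits a vertex cover `Λt` with `|E| + |Λt| ≤ |T|`; in particular
`|T| ≥ |E| + OPT_vc`. -/
theorem stmt14 {V : Type*} [DecidableEq V] (E : Finset (Sym2 V))
    (hE : ∀ e ∈ E, ¬ e.IsDiag)
    (T : Finset (Finset (V ⊕ Sym2 V)))
    (hsparse : ∀ t ∈ T, t.card ≤ 2)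
    (hc1 : ∀ e ∈ E, ∃ t ∈ T, Sum.inr e ∈ t ∧
      ∀ c ∈ t.erase (Sum.inr e), ∃ x ∈ e, c = Sum.inl x)
    (hc23 : ∀ e ∈ E, ∀ x ∈ e, ∃ t ∈ T, Sum.inl x ∈ t ∧
      ∀ c ∈ t.erase (Sum.inl x), c = Sum.inr e) :
    ∃ Λt : Finset V, (∀ e ∈ E, ∃ x ∈ e, x ∈ Λt) ∧ E.card + Λt.card ≤ T.card :=
  stmt14_general E hE T hc1 hc23
end
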